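/- The language L_c = { w·c : w ∈ {a,b}*, |w|_a ≥ |w|_b } is not accepted by any RDFAwtl. -/

import Mathlib

/-- A nondeterministic finite automaton with translucent letters (NFAwtl). -/
structure NFAwtl (Q α : Type) where
  τ : Q → Set α
  I : Set Q
  F : Set Q
  δ : Q → α → Set Q
  tr : ∀ q a, a ∈ τ q → δ q a = ∅

namespace NFAwtl

variable {Q α : Type}

/-- One computation step of an NFAwtl: delete the leftmost non-translucent letter
and change state (the head returns to the left end). -/
def Step (A : NFAwtl Q α) : Q × List α → Q × List α → Prop := fun c c' =>
  ∃ u a v, c.2 = u ++ a :: v ∧ (∀ x ∈ u, x ∈ A.τ c.1) ∧ a ∉ A.τ c.1 ∧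
    c'.1 ∈ A.δ c.1 a ∧ c'.2 = u ++ v

/-- Acceptance: from some initial state, reach a configuration whose remaining
letters are all translucent for a final state. -/
def Accepts (A : NFAwtl Q α) (w : List α) : Prop :=
  ∃ q₀ ∈ A.I, ∃ q w', Relation.ReflTransGen A.Step (q₀, w) (q, w') ∧
    (∀ x ∈ w', x ∈ A.τ q) ∧ q ∈ A.F

def lang (A : NFAwtl Q α) : Set (List α) := { w | A.Accepts w }

/-- A DFAwtl: single initial state and at most one transition per state/letter. -/
def Deterministic (A : NFAwtl Q α) : Prop :=
  (∃ q₀, A.I = {q₀}) ∧ ∀ q a, (A.δ q a).Subsingleton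

end NFAwtl

/-- A repetitive NFAwtl (RNFAwtl): on the end-of-tape marker it may accept
(states in `Facc`) or change state via `δend` and continue. -/
structure RNFAwtl (Q α : Type) where
  τ : Q → Set α
  I : Set Q
  δ : Q → α → Set Q
  δend : Q → Set Q
  Facc : Set Q
  tr : ∀ q a, a ∈ τ q → δ q a = ∅
  accEnd : ∀ q, q ∈ Facc → δend q = ∅

namespace RNFAwtl

variable {Q α : Type}

/-- One computation step of an RNFAwtl: either delete the leftmost
non-translucent letter, or, when all remaining letters are translucent,
change state via a `◁`-transition and continue. -/
def Step (A : RNFAwtl Q α) : Q × List α → Q × List α → Prop := fun c c' =>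
  (∃ u a v, c.2 = u ++ a :: v ∧ (∀ x ∈ u, x ∈ A.τ c.1) ∧ a ∉ A.τ c.1 ∧
    c'.1 ∈ A.δ c.1 a ∧ c'.2 = u ++ v)
  ∨ ((∀ x ∈ c.2, x ∈ A.τ c.1) ∧ c'.1 ∈ A.δend c.1 ∧ c'.2 = c.2)

def Accepts (A : RNFAwtl Q α) (w : List α) : Prop :=
  ∃ q₀ ∈ A.I, ∃ q w', Relation.ReflTransGen A.Step (q₀, w) (q, w') ∧
    (∀ x ∈ w', x ∈ A.τ q) ∧ q ∈ A.Facc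

def lang (A : RNFAwtl Q α) : Set (List α) := { w | A.Accepts w }

/-- An RDFAwtl: single initial state and deterministic transitions. -/
def Deterministic (A : RNFAwtl Q α) : Prop :=
  (∃ q₀, A.I = {q₀}) ∧ (∀ q a, (A.δ q a).Subsingleton) ∧ ∀ q, (A.δend q).Subsingleton

end RNFAwtl

/-- A non-returning repetitive NFAwtl (nr-NFAwtl): the head continues from the
position of the last deleted letter; on the end-of-tape marker it may change
state and return the head to the left end. -/
structure NrNFAwtl (Q α : Type) where
  τ : Q → Set α
  I : Set Q
  δ : Q → α → Set Q
  δend : Q → Set Q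
  Facc : Set Q
  tr : ∀ q a, a ∈ τ q → δ q a = ∅
  accEnd : ∀ q, q ∈ Facc → δend q = ∅

namespace NrNFAwtl

variable {Q α : Type}

/-- Configurations are `(x, q, w)`: `x` is the already-skipped prefix, the head
is on the first letter of `w`. -/
def Step (A : NrNFAwtl Q α) :
    List α × Q × List α → List α × Q × List α → Prop := fun c c' =>
  (∃ u a v, c.2.2 = u ++ a :: v ∧ (∀ x ∈ u, x ∈ A.τ c.2.1) ∧ a ∉ A.τ c.2.1 ∧
    c'.2.1 ∈ A.δ c.2.1 a ∧ c'.1 = c.1 ++ u ∧ c'.2.2 = v)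
  ∨ ((∀ x ∈ c.2.2, x ∈ A.τ c.2.1) ∧ c'.2.1 ∈ A.δend c.2.1 ∧ c'.1 = [] ∧
    c'.2.2 = c.1 ++ c.2.2)

def Accepts (A : NrNFAwtl Q α) (w : List α) : Prop :=
  ∃ q₀ ∈ A.I, ∃ x q w', Relation.ReflTransGen A.Step ([], q₀, w) (x, q, w') ∧
    (∀ y ∈ w', y ∈ A.τ q) ∧ q ∈ A.Facc

def lang (A : NrNFAwtl Q α) : Set (List α) := { w | A.Accepts w }

def Deterministic (A : NrNFAwtl Q α) : Prop :=
  (∃ q₀, A.I = {q₀}) ∧ (∀ q a, (A.δ q a).Subsingleton) ∧ ∀ q, (A.δend q).Subsingleton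

end NrNFAwtl

/-- A non-repetitive non-returning NFAwtl (nr-nr-NFAwtl): non-returning, and it
must halt as soon as all remaining letters to the right are translucent. -/
structure NrnrNFAwtl (Q α : Type) where
  τ : Q → Set α
  I : Set Q
  F : Set Q
  δ : Q → α → Set Q
  tr : ∀ q a, a ∈ τ q → δ q a = ∅

namespace NrnrNFAwtl

variable {Q α : Type}

def Step (A : NrnrNFAwtl Q α) :
    List α × Q × List α → List α × Q × List α → Prop := fun c c' =>
  ∃ u a v, c.2.2 = u ++ a :: v ∧ (∀ x ∈ u, x ∈ A.τ c.2.1) ∧ a ∉ A.τ c.2.1 ∧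
    c'.2.1 ∈ A.δ c.2.1 a ∧ c'.1 = c.1 ++ u ∧ c'.2.2 = v

def Accepts (A : NrnrNFAwtl Q α) (w : List α) : Prop :=
  ∃ q₀ ∈ A.I, ∃ x q w', Relation.ReflTransGen A.Step ([], q₀, w) (x, q, w') ∧
    (∀ y ∈ w', y ∈ A.τ q) ∧ q ∈ A.F

def lang (A : NrnrNFAwtl Q α) : Set (List α) := { w | A.Accepts w }

def Deterministic (A : NrnrNFAwtl Q α) : Prop :=
  (∃ q₀, A.I = {q₀}) ∧ ∀ q a, (A.δ q a).Subsingleton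

end NrnrNFAwtl

/-- Language classes. -/
def NFAwtlLangs (α : Type) [Fintype α] : Set (Set (List α)) :=
  { L | ∃ (Q : Type) (_ : Fintype Q) (A : NFAwtl Q α), A.lang = L }

def DFAwtlLangs (α : Type) [Fintype α] : Set (Set (List α)) :=
  { L | ∃ (Q : Type) (_ : Fintype Q) (A : NFAwtl Q α), A.Deterministic ∧ A.lang = L }

def RNFAwtlLangs (α : Type) [Fintype α] : Set (Set (List α)) :=
  { L | ∃ (Q : Type) (_ : Fintype Q) (A : RNFAwtl Q α), A.lang = L }

def RDFAwtlLangs (α : Type) [Fintype α] : Set (Set (List α)) :=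
  { L | ∃ (Q : Type) (_ : Fintype Q) (A : RNFAwtl Q α), A.Deterministic ∧ A.lang = L }

def NrNFAwtlLangs (α : Type) [Fintype α] : Set (Set (List α)) :=
  { L | ∃ (Q : Type) (_ : Fintype Q) (A : NrNFAwtl Q α), A.lang = L }

def NrDFAwtlLangs (α : Type) [Fintype α] : Set (Set (List α)) :=
  { L | ∃ (Q : Type) (_ : Fintype Q) (A : NrNFAwtl Q α), A.Deterministic ∧ A.lang = L }

def NrnrNFAwtlLangs (α : Type) [Fintype α] : Set (Set (List α)) :=
  { L | ∃ (Q : Type) (_ : Fintype Q) (A : NrnrNFAwtl Q α), A.lang = L }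

def NrnrDFAwtlLangs (α : Type) [Fintype α] : Set (Set (List α)) :=
  { L | ∃ (Q : Type) (_ : Fintype Q) (A : NrnrNFAwtl Q α), A.Deterministic ∧ A.lang = L }

/-- The three-letter alphabet {a, b, c}. -/
inductive Al : Type
  | a | b | c
deriving DecidableEq

instance instFintypeAl : Fintype Al :=
  ⟨{Al.a, Al.b, Al.c}, fun x => by cases x <;> simp⟩

/-- The language L_c = { w·c : w ∈ {a,b}*, |w|_a ≥ |w|_b }. -/
def Lc : Set (List Al) :=
  { u | ∃ w : List Al, Al.c ∉ w ∧ w.count Al.b ≤ w.count Al.a ∧ u = w ++ [Al.c] }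

/-!
Suppose `A` is deterministic and accepts `L_c`. If `v x c ∈ L_c` with `x ∈ {a, b}`, then
`v c x ∉ L_c`, yet the runs of `A` on the two words differ only by the swap of the last two letters
until `x` is deleted. As accepting configurations are terminal, the rejected run can never join
the accepted one; hence no configuration `u x c` on the accepted run is accepting, and when `u` is
translucent, `x` and `c` are both translucent or both not (in particular `c` is never deleted
while `a`s remain). On the inputs `a^n b^j c` these constraints make the run independent of `j`:
it deletes all `a`s in the same way, and then passes through states `y₀, y₁, …` where `y m` is
about to delete a `b` and the run on `a^n b^(m+j) c` reaches `y m` with `b^j c` left. For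
`n > |Q|` two of these states coincide, giving a loop that only consumes `b`s, so `a^n b^M c` is
accepted for arbitrarily large `M`.
-/

theorem List.split_first_not_mem_unique {α : Type} {S : Set α} {u₁ u₂ v₁ v₂ : List α}
    {a₁ a₂ : α} (h : u₁ ++ a₁ :: v₁ = u₂ ++ a₂ :: v₂) (hu₁ : ∀ y ∈ u₁, y ∈ S)
    (hu₂ : ∀ y ∈ u₂, y ∈ S) (ha₁ : a₁ ∉ S) (ha₂ : a₂ ∉ S) :
    u₁ = u₂ ∧ a₁ = a₂ ∧ v₁ = v₂ := by
  induction u₁ generalizing u₂ with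
  | nil =>
    cases u₂ with
    | nil => simpa using h
    | cons z u₂ =>
      obtain ⟨rfl, -⟩ := List.cons_eq_cons.1 (by simpa using h)
      exact absurd (hu₂ _ List.mem_cons_self) ha₁
  | cons y u₁ ih =>
    cases u₂ with
    | nil =>
      obtain ⟨rfl, -⟩ := List.cons_eq_cons.1 (by simpa using h)
      exact absurd (hu₁ _ List.mem_cons_self) ha₂
    | cons z u₂ =>
      obtain ⟨rfl, htail⟩ := List.cons_eq_cons.1 (by simpa only [List.cons_append] using h)
      obtain ⟨rfl, rfl, rfl⟩ := ih htail (fun x hx => hu₁ x (List.mem_cons_of_mem _ hx))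
        (fun x hx => hu₂ x (List.mem_cons_of_mem _ hx))
      exact ⟨rfl, rfl, rfl⟩

theorem exists_seq_of_forall_exists {β : Type*} {P : ℕ → β → Prop} {R : β → β → Prop}
    {N : ℕ} {b₀ : β} (h₀ : P 0 b₀) (hs : ∀ m < N, ∀ b, P m b → ∃ b', P (m + 1) b' ∧ R b b') :
    ∃ f : ℕ → β, (∀ m ≤ N, P m (f m)) ∧ ∀ m < N, R (f m) (f (m + 1)) := by
  have : Nonempty β := ⟨b₀⟩
  choose! next hnext using hs
  let f : ℕ → β := fun m => Nat.rec b₀ next m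
  have hf : ∀ m ≤ N, P m (f m) := by
    intro m
    induction m with
    | zero => exact fun _ => h₀
    | succ m ih => exact fun hm => (hnext m (by omega) _ (ih (by omega))).1
  exact ⟨f, hf, fun m hm => (hnext m hm _ (hf m hm.le)).2⟩

namespace Relation.ReflTransGen

variable {β : Type*} {r : β → β → Prop}

theorem of_ladder {g : ℕ → ℕ → β} {N : ℕ}
    (h : ∀ m < N, ∀ j, ReflTransGen r (g m (j + 1)) (g (m + 1) j)) {k : ℕ} :
    ∀ d, k + d ≤ N → ∀ j, ReflTransGen r (g k (d + j)) (g (k + d) j)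
  | 0, _, j => by simpa using .refl
  | d + 1, hd, j => by
    have := (of_ladder h (k := k) d (by omega) (j + 1)).trans (h (k + d) (by omega) j)
    rwa [← add_assoc, add_right_comm d] at this

theorem shift_mul {f : ℕ → β} {d : ℕ} (h : ∀ j, ReflTransGen r (f (d + j)) (f j)) :
    ∀ t j, ReflTransGen r (f (t * d + j)) (f j)
  | 0, j => by simpa using .refl
  | t + 1, j => by
    have := (h (t * d + j)).trans (shift_mul h t j)
    rwa [← add_assoc, add_comm d, ← Nat.succ_mul] at this

end Relation.ReflTransGen

namespace RNFAwtl

variable {Q α : Type} {A : RNFAwtl Q α}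

def IsAccepting (A : RNFAwtl Q α) (c : Q × List α) : Prop :=
  (∀ x ∈ c.2, x ∈ A.τ c.1) ∧ c.1 ∈ A.Facc

abbrev Reaches (A : RNFAwtl Q α) : Q × List α → Q × List α → Prop :=
  Relation.ReflTransGen A.Step

def CanAccept (A : RNFAwtl Q α) (c : Q × List α) : Prop :=
  ∃ d, A.Reaches c d ∧ A.IsAccepting d

def StepDeterministic (A : RNFAwtl Q α) : Prop :=
  (∀ q a, (A.δ q a).Subsingleton) ∧ ∀ q, (A.δend q).Subsingleton

structure DetRecognizes (A : RNFAwtl Q α) (q₀ : Q) (L : Set (List α)) : Prop where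
  stepDeterministic : A.StepDeterministic
  canAccept_iff : ∀ w, A.CanAccept (q₀, w) ↔ w ∈ L

theorem accepts_iff_canAccept {q₀ : Q} (hI : A.I = {q₀}) (w : List α) :
    A.Accepts w ↔ A.CanAccept (q₀, w) := by
  simp [Accepts, CanAccept, IsAccepting, hI]

theorem step_split_iff {q : Q} {u v : List α} {a : α} {d : Q × List α}
    (hu : ∀ y ∈ u, y ∈ A.τ q) (ha : a ∉ A.τ q) :
    A.Step (q, u ++ a :: v) d ↔ d.1 ∈ A.δ q a ∧ d.2 = u ++ v := by
  constructor
  · rintro (⟨u', a', v', h, hu', ha', hd, hd'⟩ | ⟨hall, -, -⟩)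
    · obtain ⟨rfl, rfl, rfl⟩ := List.split_first_not_mem_unique h hu hu' ha ha'
      exact ⟨hd, hd'⟩
    · exact absurd (hall a (by simp)) ha
  · rintro ⟨hd, hd'⟩
    exact Or.inl ⟨u, a, v, rfl, hu, ha, hd, hd'⟩

theorem step_iff_of_forall_mem {q : Q} {w : List α} {d : Q × List α}
    (hw : ∀ y ∈ w, y ∈ A.τ q) :
    A.Step (q, w) d ↔ d.1 ∈ A.δend q ∧ d.2 = w := by
  constructor
  · rintro (⟨u, a, v, rfl, -, ha, -⟩ | ⟨-, hd, hd'⟩)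
    · exact absurd (hw a (by simp)) ha
    · exact ⟨hd, hd'⟩
  · rintro ⟨hd, hd'⟩
    exact Or.inr ⟨hw, hd, hd'⟩

theorem step_sublist {c d : Q × List α} (h : A.Step c d) : d.2.Sublist c.2 := by
  rcases h with ⟨u, a, v, hc, -, -, -, hd⟩ | ⟨-, -, hd⟩
  · rw [hc, hd]
    exact List.Sublist.append_left (List.sublist_cons_self a v) u
  · rw [hd]

theorem IsAccepting.not_step {c d : Q × List α} (hc : A.IsAccepting c) : ¬ A.Step c d := by
  rintro (⟨u, a, v, h, -, ha, -⟩ | ⟨-, hd, -⟩)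
  · exact ha (hc.1 a (by simp [h]))
  · simp [A.accEnd _ hc.2] at hd

theorem step_deterministic (hdet : A.StepDeterministic) {c d d' : Q × List α}
    (h : A.Step c d) (h' : A.Step c d') : d = d' := by
  obtain ⟨q, w⟩ := c
  rcases h with ⟨u, a, v, rfl, hu, ha, hd, hd'⟩ | ⟨hw, hd, hd'⟩
  · obtain ⟨hd₂, hd₂'⟩ := (step_split_iff hu ha).1 h'
    exact Prod.ext (hdet.1 q a hd hd₂) (hd'.trans hd₂'.symm)
  · obtain ⟨hd₂, hd₂'⟩ := (step_iff_of_forall_mem hw).1 h'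
    exact Prod.ext (hdet.2 q hd hd₂) (hd'.trans hd₂'.symm)

/-- Accepting configurations are terminal, so the unique run from `c` passes through every
configuration reachable from `c`. -/
theorem canAccept_iff_of_reaches (hdet : A.StepDeterministic) {c d : Q × List α}
    (h : A.Reaches c d) : A.CanAccept c ↔ A.CanAccept d := by
  refine ⟨fun hc => ?_, fun ⟨e, hde, he⟩ => ⟨e, h.trans hde, he⟩⟩
  induction h using Relation.ReflTransGen.head_induction_on with
  | refl => exact hc
  | head hstep _ ih =>
    obtain ⟨e, hce, he⟩ := hc
    rcases Relation.ReflTransGen.cases_head hce with rfl | ⟨c', hstep', hc'e⟩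
    · exact absurd hstep he.not_step
    · exact ih ⟨e, step_deterministic hdet hstep' hstep ▸ hc'e, he⟩

theorem CanAccept.exists_step {c : Q × List α} (hc : A.CanAccept c)
    (hna : ¬ A.IsAccepting c) : ∃ d, A.Step c d := by
  obtain ⟨f, hf, hacc⟩ := hc
  rcases hf.cases_head with rfl | ⟨d, hd, -⟩
  exacts [absurd hacc hna, ⟨d, hd⟩]

/-- The third case is the deletion of `x` while `e` is not translucent. -/
theorem step_swap_last {p : Q} {v : List α} {x e : α} {d : Q × List α}
    (h : A.Step (p, v ++ [x, e]) d) :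
    (∃ p' v', d = (p', v' ++ [x, e]) ∧ A.Step (p, v ++ [e, x]) (p', v' ++ [e, x])) ∨
      A.Step (p, v ++ [e, x]) d ∨ (d.2 = v ++ [e] ∧ x ∉ v) := by
  obtain ⟨p', w'⟩ := d
  rcases h with ⟨u, a, w, h, hu, ha, hp', rfl⟩ | ⟨hall, hp', rfl⟩
  · have deletes_x (hu : ∀ y ∈ v, y ∈ A.τ p) (ha : x ∉ A.τ p) (hp' : p' ∈ A.δ p x) :
        A.Step (p, v ++ [e, x]) (p', v ++ [e]) ∨ x ∉ v := by
      by_cases he : e ∈ A.τ p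
      · have hve : ∀ y ∈ v ++ [e], y ∈ A.τ p := by
          simp only [List.mem_append, List.mem_singleton]
          rintro y (hy | rfl)
          exacts [hu y hy, he]
        simpa using Or.inl ((step_split_iff (v := []) (d := (p', v ++ [e])) hve ha).2
          ⟨hp', by simp⟩)
      · exact Or.inr fun hx => ha (hu x hx)
    rcases List.append_eq_append_iff.1 h with ⟨s, rfl, hs⟩ | ⟨s, rfl, hs⟩
    · rcases s with _ | ⟨s₀, _ | ⟨s₁, s⟩⟩ <;> simp at hs
      · obtain ⟨rfl, rfl⟩ := hs
        simp only [List.append_nil] at hu ⊢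
        rcases deletes_x hu ha hp' with h' | h' <;> simp [h']
      · obtain ⟨rfl, rfl, rfl⟩ := hs
        refine Or.inr (Or.inl ?_)
        simpa using (step_split_iff (v := [x]) (d := (p', v ++ [x]))
          (fun y hy => hu y (by simp [hy])) ha).2 ⟨hp', by simp⟩
    · rcases s with _ | ⟨s₀, s⟩ <;> simp at hs
      · obtain ⟨rfl, rfl⟩ := hs
        simp only [List.append_nil] at deletes_x ⊢
        rcases deletes_x hu ha hp' with h' | h' <;> simp [h']
      · obtain ⟨rfl, rfl⟩ := hs
        refine Or.inl ⟨p', u ++ s, by simp, ?_⟩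
        simpa using (step_split_iff (v := s ++ [e, x]) (d := (p', u ++ s ++ [e, x])) hu ha).2
          ⟨hp', by simp⟩
  · refine Or.inl ⟨p', v, rfl, (step_iff_of_forall_mem ?_).2 ⟨hp', rfl⟩⟩
    intro y hy
    exact hall y (by simp at hy ⊢; tauto)

section SwapLast

variable {q p : Q} {w v : List α} {x e : α}

theorem reaches_swap_last (hdet : A.StepDeterministic) (hs : A.CanAccept (q, w ++ [x, e]))
    (hs' : ¬ A.CanAccept (q, w ++ [e, x])) (h : A.Reaches (q, w ++ [x, e]) (p, v ++ [x, e])) :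
    A.Reaches (q, w ++ [e, x]) (p, v ++ [e, x]) := by
  have hxe : x ≠ e := by rintro rfl; exact hs' hs
  -- A merge of the two runs would make the swapped word accepted; once `x` has been deleted,
  -- the word can no longer end in `x e`.
  have key : ∀ d, A.Reaches (q, w ++ [x, e]) d →
      (∃ p v, d = (p, v ++ [x, e]) ∧ A.Reaches (q, w ++ [e, x]) (p, v ++ [e, x])) ∨
        x ∉ d.2 := by
    intro d hd
    induction hd with
    | refl => exact Or.inl ⟨q, w, rfl, .refl⟩
    | tail hd hstep ih =>
      rcases ih with ⟨p, v, rfl, hshadow⟩ | hx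
      · rcases step_swap_last hstep with ⟨p', v', rfl, hstep'⟩ | hmerge | ⟨hd', hxv⟩
        · exact Or.inl ⟨p', v', rfl, hshadow.tail hstep'⟩
        · refine absurd ?_ hs'
          rw [canAccept_iff_of_reaches hdet (hshadow.tail hmerge),
            ← canAccept_iff_of_reaches hdet (hd.tail hstep)]
          exact hs
        · simp [hd', hxv, hxe]
      · exact Or.inr fun hx' => hx ((step_sublist hstep).subset hx')
  rcases key _ h with ⟨p', v', heq, hr⟩ | hx
  · simp only [Prod.mk.injEq, List.append_cancel_right_eq] at heq
    rwa [heq.1, heq.2]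
  · simp at hx

theorem not_isAccepting_of_reaches_swap (hdet : A.StepDeterministic)
    (hs : A.CanAccept (q, w ++ [x, e])) (hs' : ¬ A.CanAccept (q, w ++ [e, x]))
    (h : A.Reaches (q, w ++ [x, e]) (p, v ++ [x, e])) : ¬ A.IsAccepting (p, v ++ [x, e]) := by
  refine fun hacc => hs' ⟨_, reaches_swap_last hdet hs hs' h, fun y hy => hacc.1 y ?_, hacc.2⟩
  simp only [List.mem_append, List.mem_cons, List.not_mem_nil] at hy ⊢
  tauto

/-- If exactly one of `x`, `e` were translucent, the next step would take the word and its swapped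
version to the same configuration. -/
theorem mem_τ_iff_of_reaches_swap (hdet : A.StepDeterministic)
    (hs : A.CanAccept (q, w ++ [x, e])) (hs' : ¬ A.CanAccept (q, w ++ [e, x]))
    (h : A.Reaches (q, w ++ [x, e]) (p, v ++ [x, e])) (hv : ∀ y ∈ v, y ∈ A.τ p) :
    x ∈ A.τ p ↔ e ∈ A.τ p := by
  have halive : A.CanAccept (p, v ++ [x, e]) := (canAccept_iff_of_reaches hdet h).1 hs
  obtain ⟨d, hstep⟩ :=
    halive.exists_step (not_isAccepting_of_reaches_swap hdet hs hs' h)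
  have no_merge (h' : A.Step (p, v ++ [e, x]) d) : False := by
    refine hs' ?_
    rw [canAccept_iff_of_reaches hdet ((reaches_swap_last hdet hs hs' h).tail h'),
      ← canAccept_iff_of_reaches hdet (.single hstep)]
    exact halive
  have hvy {y : α} (hy : y ∈ A.τ p) : ∀ z ∈ v ++ [y], z ∈ A.τ p := by
    simp only [List.mem_append, List.mem_singleton]
    rintro z (hz | rfl)
    exacts [hv z hz, hy]
  constructor
  · intro hx
    by_contra he
    obtain ⟨hd₁, hd₂⟩ := (step_split_iff (v := []) (hvy hx) he).1 (by simpa using hstep)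
    exact no_merge ((step_split_iff (v := [x]) hv he).2 ⟨hd₁, by simpa using hd₂⟩)
  · intro he
    by_contra hx
    obtain ⟨hd₁, hd₂⟩ := (step_split_iff (v := [e]) hv hx).1 hstep
    exact no_merge (by
      simpa using (step_split_iff (v := []) (hvy he) hx).2 ⟨hd₁, by simpa using hd₂⟩)

end SwapLast

end RNFAwtl

open List

def abcWord (i j : ℕ) : List Al := replicate i Al.a ++ replicate j Al.b ++ [Al.c]

theorem abcWord_succ_left (i j : ℕ) : abcWord (i + 1) j = Al.a :: abcWord i j := by
  simp [abcWord, replicate_succ]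

theorem abcWord_zero_succ (j : ℕ) : abcWord 0 (j + 1) = Al.b :: abcWord 0 j := by
  simp [abcWord, replicate_succ]

theorem abcWord_succ_right (i j : ℕ) :
    abcWord i (j + 1) = replicate i Al.a ++ replicate j Al.b ++ [Al.b, Al.c] := by
  simp [abcWord, replicate_succ']

theorem abcWord_one (i : ℕ) : abcWord i 1 = replicate i Al.a ++ [Al.b, Al.c] := by
  simp [abcWord]

theorem abcWord_succ_zero (i : ℕ) : abcWord (i + 1) 0 = replicate i Al.a ++ [Al.a, Al.c] := by
  simp [abcWord, replicate_succ']

theorem forall_mem_abcWord {S : Set Al} {i j : ℕ} :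
    (∀ y ∈ abcWord i j, y ∈ S) ↔ (i = 0 ∨ Al.a ∈ S) ∧ (j = 0 ∨ Al.b ∈ S) ∧ Al.c ∈ S := by
  simp only [abcWord, forall_mem_append, forall_mem_replicate, forall_mem_singleton, and_assoc]

theorem abcWord_mem_Lc_iff {i j : ℕ} : abcWord i j ∈ Lc ↔ j ≤ i := by
  constructor
  · rintro ⟨w, -, hcount, hw⟩
    obtain rfl := append_inj_left' hw rfl
    simpa [count_replicate] using hcount
  · intro hji
    exact ⟨replicate i Al.a ++ replicate j Al.b, by simp [mem_replicate], by
      simpa [count_replicate] using hji, rfl⟩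

theorem append_singleton_not_mem_Lc {v : List Al} {x : Al} (hx : x ≠ Al.c) : v ++ [x] ∉ Lc :=
  fun ⟨_, _, _, hw⟩ => hx (by simpa using append_inj_right' hw rfl)

namespace RNFAwtl

variable {Q : Type} {A : RNFAwtl Q Al}

theorem step_abcWord_succ_left_iff {q : Q} {i j : ℕ} {d : Q × List Al} (ha : Al.a ∉ A.τ q) :
    A.Step (q, abcWord (i + 1) j) d ↔ d.1 ∈ A.δ q Al.a ∧ d.2 = abcWord i j := by
  rw [abcWord_succ_left]
  exact step_split_iff (u := []) (by simp) ha

theorem step_abcWord_zero_succ_iff {q : Q} {j : ℕ} {d : Q × List Al} (hb : Al.b ∉ A.τ q) :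
    A.Step (q, abcWord 0 (j + 1)) d ↔ d.1 ∈ A.δ q Al.b ∧ d.2 = abcWord 0 j := by
  rw [abcWord_zero_succ]
  exact step_split_iff (u := []) (by simp) hb

namespace DetRecognizes

variable {q₀ : Q}

theorem canAccept_of_reaches (h : A.DetRecognizes q₀ Lc) {i j : ℕ} (hji : j ≤ i)
    {d : Q × List Al} (hr : A.Reaches (q₀, abcWord i j) d) : A.CanAccept d :=
  (canAccept_iff_of_reaches h.stepDeterministic hr).1
    ((h.canAccept_iff _).2 (abcWord_mem_Lc_iff.2 hji))

theorem not_canAccept_append_singleton (h : A.DetRecognizes q₀ Lc) {v : List Al} {x : Al}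
    (hx : x ≠ Al.c) : ¬ A.CanAccept (q₀, v ++ [x]) :=
  fun hacc => append_singleton_not_mem_Lc hx ((h.canAccept_iff _).1 hacc)

theorem not_isAccepting_abcWord_one (h : A.DetRecognizes q₀ Lc) {n m i : ℕ} {q : Q}
    (hm : m + 1 ≤ n) (hr : A.Reaches (q₀, abcWord n (m + 1)) (q, abcWord i 1)) :
    ¬ A.IsAccepting (q, abcWord i 1) := by
  have hs := h.canAccept_of_reaches hm .refl
  rw [abcWord_succ_right] at hs hr
  rw [abcWord_one] at hr ⊢
  exact not_isAccepting_of_reaches_swap h.stepDeterministic hs (by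
    simpa using h.not_canAccept_append_singleton (v := replicate n Al.a ++ replicate m Al.b ++
      [Al.c]) (x := Al.b) (by decide)) hr

theorem mem_τ_b_iff_c (h : A.DetRecognizes q₀ Lc) {n m i : ℕ} {q : Q}
    (hm : m + 1 ≤ n) (hr : A.Reaches (q₀, abcWord n (m + 1)) (q, abcWord i 1))
    (ha : i = 0 ∨ Al.a ∈ A.τ q) : Al.b ∈ A.τ q ↔ Al.c ∈ A.τ q := by
  have hs := h.canAccept_of_reaches hm .refl
  rw [abcWord_succ_right] at hs hr
  rw [abcWord_one] at hr
  exact mem_τ_iff_of_reaches_swap h.stepDeterministic hs (by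
    simpa using h.not_canAccept_append_singleton (v := replicate n Al.a ++ replicate m Al.b ++
      [Al.c]) (x := Al.b) (by decide)) hr (forall_mem_replicate.2 ha)

theorem mem_τ_c_of_mem_τ_a (h : A.DetRecognizes q₀ Lc) {n i : ℕ} {q : Q}
    (hr : A.Reaches (q₀, abcWord (n + 1) 0) (q, abcWord (i + 1) 0)) (ha : Al.a ∈ A.τ q) :
    Al.c ∈ A.τ q := by
  have hs := h.canAccept_of_reaches (i := n + 1) (Nat.zero_le _) .refl
  simp only [abcWord_succ_zero] at hs hr
  refine (mem_τ_iff_of_reaches_swap h.stepDeterministic hs ?_ hr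
    (forall_mem_replicate.2 (Or.inr ha))).1 ha
  simpa using h.not_canAccept_append_singleton (v := replicate n Al.a ++ [Al.c]) (x := Al.a)
    (by decide)

theorem not_isAccepting_abcWord_zero (h : A.DetRecognizes q₀ Lc) {n m i : ℕ} {q : Q}
    (hm : m + 1 ≤ n) (hr : A.Reaches (q₀, abcWord n (m + 1)) (q, abcWord i 1)) :
    ¬ A.IsAccepting (q, abcWord i 0) := by
  rintro ⟨hall, hfin⟩
  obtain ⟨ha, -, hc⟩ := forall_mem_abcWord.1 hall
  have hb := (h.mem_τ_b_iff_c hm hr ha).2 hc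
  exact h.not_isAccepting_abcWord_one hm hr ⟨forall_mem_abcWord.2 ⟨ha, Or.inr hb, hc⟩, hfin⟩

theorem exists_b_deleting_state (h : A.DetRecognizes q₀ Lc) {n r i : ℕ} {x : Q}
    (hr : r + 1 ≤ n) (hi : i = 0 ∨ r = 0)
    (hx : ∀ j, A.Reaches (q₀, abcWord n (r + j)) (x, abcWord i j)) :
    ∃ y, Al.b ∉ A.τ y ∧ ∀ j, A.Reaches (x, abcWord i j) (y, abcWord 0 j) := by
  obtain ⟨e, hpath, he⟩ := h.canAccept_of_reaches (by omega) (hx 0)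
  generalize hc : (x, abcWord i 0) = c at hpath
  induction hpath using Relation.ReflTransGen.head_induction_on generalizing x i with
  | refl =>
    subst hc
    exact (h.not_isAccepting_abcWord_zero hr (hx 1) he).elim
  | @head c d hstep _ ih =>
    subst hc
    obtain ⟨p, w⟩ := d
    by_cases ha : i = 0 ∨ Al.a ∈ A.τ x
    · by_cases hc : Al.c ∈ A.τ x
      · have hb := (h.mem_τ_b_iff_c hr (hx 1) ha).2 hc
        have hall (j : ℕ) : ∀ y ∈ abcWord i j, y ∈ A.τ x :=
          forall_mem_abcWord.2 ⟨ha, Or.inr hb, hc⟩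
        obtain ⟨hp, rfl⟩ := (step_iff_of_forall_mem (hall 0)).1 hstep
        have hlift (j : ℕ) := (step_iff_of_forall_mem (d := (p, abcWord i j)) (hall j)).2 ⟨hp, rfl⟩
        obtain ⟨y, hyb, hy⟩ := ih hi (fun j => (hx j).tail (hlift j)) rfl
        exact ⟨y, hyb, fun j => .head (hlift j) (hy j)⟩
      · rcases Nat.eq_zero_or_pos i with rfl | hi0
        · exact ⟨x, fun hb => hc ((h.mem_τ_b_iff_c hr (hx 1) ha).1 hb), fun _ => .refl⟩
        · obtain ⟨i, rfl⟩ := Nat.exists_eq_add_one.2 hi0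
          obtain ⟨n, rfl⟩ := Nat.exists_eq_add_one.2 (show 0 < n by omega)
          obtain rfl := hi.resolve_left (by omega)
          exact absurd (h.mem_τ_c_of_mem_τ_a (by simpa using hx 0) (ha.resolve_left (by omega)))
            hc
    · obtain ⟨hi0, hxa⟩ := not_or.1 ha
      obtain ⟨i, rfl⟩ := Nat.exists_eq_add_one.2 (Nat.pos_of_ne_zero hi0)
      obtain ⟨hp, rfl⟩ := (step_abcWord_succ_left_iff hxa).1 hstep
      have hlift (j : ℕ) := (step_abcWord_succ_left_iff (d := (p, abcWord i j)) hxa).2 ⟨hp, rfl⟩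
      obtain ⟨y, hyb, hy⟩ := ih (Or.inr (hi.resolve_left hi0)) (fun j => (hx j).tail (hlift j)) rfl
      exact ⟨y, hyb, fun j => .head (hlift j) (hy j)⟩

theorem exists_next_b_deleting_state (h : A.DetRecognizes q₀ Lc) {n m : ℕ} {y : Q}
    (hm : m + 2 ≤ n) (hyb : Al.b ∉ A.τ y)
    (hy : ∀ j, A.Reaches (q₀, abcWord n (m + j)) (y, abcWord 0 j)) :
    ∃ y', Al.b ∉ A.τ y' ∧ (∀ j, A.Reaches (q₀, abcWord n (m + 1 + j)) (y', abcWord 0 j)) ∧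
      ∀ j, A.Reaches (y, abcWord 0 (j + 1)) (y', abcWord 0 j) := by
  obtain ⟨⟨z, w⟩, hstep⟩ := (h.canAccept_of_reaches (by omega) (hy 1)).exists_step
    fun hacc => hyb (hacc.1 Al.b (by simp [abcWord]))
  obtain ⟨hz, -⟩ := (step_abcWord_zero_succ_iff hyb).1 hstep
  have hlift (j : ℕ) := (step_abcWord_zero_succ_iff (d := (z, abcWord 0 j)) hyb).2 ⟨hz, rfl⟩
  have hz_reach (j : ℕ) : A.Reaches (q₀, abcWord n (m + 1 + j)) (z, abcWord 0 j) := by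
    rw [add_assoc, add_comm 1]
    exact (hy (j + 1)).tail (hlift j)
  obtain ⟨y', hy'b, hy'⟩ := h.exists_b_deleting_state (by omega) (Or.inl rfl) hz_reach
  exact ⟨y', hy'b, fun j => (hz_reach j).trans (hy' j), fun j => .head (hlift j) (hy' j)⟩

theorem not_reaches_cycle (h : A.DetRecognizes q₀ Lc) {n k d : ℕ} {y : Q} (hk : k ≤ n)
    (hd : 0 < d) (hy : ∀ j, A.Reaches (q₀, abcWord n (k + j)) (y, abcWord 0 j))
    (hcycle : ∀ j, A.Reaches (y, abcWord 0 (d + j)) (y, abcWord 0 j)) : False := by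
  have hpump := Relation.ReflTransGen.shift_mul (f := fun j => (y, abcWord 0 j)) hcycle (n + 1) 0
  have hacc : A.CanAccept (q₀, abcWord n (k + ((n + 1) * d + 0))) :=
    (canAccept_iff_of_reaches h.stepDeterministic ((hy _).trans hpump)).2
      (h.canAccept_of_reaches (by omega) (hy 0))
  have hle := abcWord_mem_Lc_iff.1 ((h.canAccept_iff _).1 hacc)
  have := Nat.le_mul_of_pos_right (n + 1) hd
  omega

end DetRecognizes

theorem not_detRecognizes_Lc {Q : Type} [Fintype Q] (A : RNFAwtl Q Al) (q₀ : Q) :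
    ¬ A.DetRecognizes q₀ Lc := by
  intro h
  obtain ⟨K, hK⟩ : ∃ K, Fintype.card Q < K + 1 := ⟨_, Nat.lt_succ_self _⟩
  obtain ⟨y₀, hy₀b, hy₀⟩ := h.exists_b_deleting_state (n := K + 1) (r := 0) (x := q₀)
    (by omega) (Or.inr rfl) fun j => by simpa using .refl
  obtain ⟨ys, hys, hladder⟩ := exists_seq_of_forall_exists (N := K)
    (P := fun m y => Al.b ∉ A.τ y ∧ ∀ j, A.Reaches (q₀, abcWord (K + 1) (m + j)) (y, abcWord 0 j))
    (R := fun y y' => ∀ j, A.Reaches (y, abcWord 0 (j + 1)) (y', abcWord 0 j))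
    ⟨hy₀b, by simpa using hy₀⟩ fun m hm y ⟨hyb, hy⟩ => by
      obtain ⟨y', hy'b, hy', hyy'⟩ := h.exists_next_b_deleting_state (by omega) hyb hy
      exact ⟨y', ⟨hy'b, hy'⟩, hyy'⟩
  obtain ⟨k₁, k₂, hne, heq⟩ :=
    Fintype.exists_ne_map_eq_of_card_lt (fun m : Fin (K + 1) => ys m) (by simpa using hK)
  wlog hlt : k₁ < k₂ generalizing k₁ k₂
  · exact this k₂ k₁ hne.symm heq.symm (lt_of_le_of_ne (not_lt.1 hlt) hne.symm)
  have hlt' : (k₁ : ℕ) < k₂ := hlt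
  have hk₂ := k₂.is_lt
  have hcycle := Relation.ReflTransGen.of_ladder (g := fun m j => (ys m, abcWord 0 j)) hladder
    (k := k₁) (k₂ - k₁) (by omega)
  rw [Nat.add_sub_cancel' hlt'.le] at hcycle
  exact h.not_reaches_cycle (d := k₂ - k₁) (by omega) (by omega) (hys k₁ (by omega)).2
    (by simpa [← heq] using hcycle)

end RNFAwtl

/-- L_c is not accepted by any RDFAwtl. -/
theorem Lc_not_RDFAwtl : Lc ∉ RDFAwtlLangs Al := by
  rintro ⟨Q, _, A, ⟨⟨q₀, hI⟩, hδ, hend⟩, hlang⟩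
  refine A.not_detRecognizes_Lc q₀ ⟨⟨hδ, hend⟩, fun w => ?_⟩
  rw [← hlang]
  exact (A.accepts_iff_canAccept hI w).symm
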